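/- arXiv:2002.10754 — 2 statements merged into one kernel-verified Lean document; each statement's English description precedes it below -/
import Mathlib

section
/- Let $H = (N-k-2)/2 > 0$, $\mu < H^2$, $\alpha_- = H - \sqrt{H^2-\mu}$, and let $d$ be a $C^2$ positive function with $|\nabla d| = 1$ and $\Delta d = \frac{N-k-1}{d} + g$, $g$ bounded. Then for every $\varepsilon \in (0,1)$ there exists $\beta > 0$ such that on $\{0 < d < \beta\}$ the function $\eta = d^{-\alpha_-} - d^{-\alpha_-+\varepsilon}$ satisfies $\eta \geq 0$ and $-\Delta\eta - \mu d^{-2}\eta \geq 0$. -/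
/-!
Write `t = d x` and `η = φ ∘ d` with `φ t = t ^ (-α₋) - t ^ (-α₋ + ε)`. Since `|∇d| = 1`, the chain
rule gives `Δη = φ'(t) Δd + φ''(t)`, so on a power `t ^ p` the operator `-Δ - μ d⁻²` acts as
multiplication by `-(p² + 2Hp + μ) t⁻²` up to an error `-g p t ^ (p - 1)`. The exponent `-α₋` is a
root of `p² + 2Hp + μ`, and `-α₋ + ε` leaves `C = ε² + 2ε(H - α₋) > 0`. Hence
`-Δη - μ d⁻² η = t ^ (-α₋ - 1) (C t ^ (ε - 1) + g (α₋ + (ε - α₋) t ^ ε))`, and because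
`t ^ (ε - 1) → ∞` as `t → 0⁺` while the bracketed `g`-term stays bounded, this is nonnegative for
`t` small.
-/

noncomputable def lap {n : ℕ} (f : EuclideanSpace ℝ (Fin n) → ℝ)
    (x : EuclideanSpace ℝ (Fin n)) : ℝ :=
  ∑ i : Fin n,
    fderiv ℝ (fun y => fderiv ℝ f y (EuclideanSpace.single i 1)) x (EuclideanSpace.single i 1)

noncomputable def gradNormSq {n : ℕ} (f : EuclideanSpace ℝ (Fin n) → ℝ)
    (x : EuclideanSpace ℝ (Fin n)) : ℝ :=
  ∑ i : Fin n, (fderiv ℝ f x (EuclideanSpace.single i 1)) ^ 2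

open Filter Topology Set

section Laplacian

variable {n : ℕ} {f : EuclideanSpace ℝ (Fin n) → ℝ} {x : EuclideanSpace ℝ (Fin n)}

theorem lap_comp (hf : ContDiffAt ℝ 2 f x) {φ φ' : ℝ → ℝ} {φ'' : ℝ}
    (hφ : ∀ᶠ y in 𝓝 x, HasDerivAt φ (φ' (f y)) (f y)) (hφ' : HasDerivAt φ' φ'' (f x)) :
    lap (fun y => φ (f y)) x = φ' (f x) * lap f x + φ'' * gradNormSq f x := by
  have hfd : ∀ᶠ y in 𝓝 x, HasFDerivAt f (fderiv ℝ f y) y :=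
    (hf.eventually (by simp)).mono fun y hy => (hy.differentiableAt two_ne_zero).hasFDerivAt
  have hfderiv : fderiv ℝ (fun y => φ (f y)) =ᶠ[𝓝 x] fun y => φ' (f y) • fderiv ℝ f y :=
    (hφ.and hfd).mono fun y hy => (hy.1.comp_hasFDerivAt y hy.2).fderiv
  have hφ'f : HasFDerivAt (fun y => φ' (f y)) (φ'' • fderiv ℝ f x) x :=
    hφ'.comp_hasFDerivAt x (hf.differentiableAt two_ne_zero).hasFDerivAt
  have hpartial (v) : DifferentiableAt ℝ (fun y => fderiv ℝ f y v) x :=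
    ((hf.fderiv_right (m := 1) le_rfl).differentiableAt one_ne_zero).clm_apply
      (differentiableAt_const v)
  unfold lap gradNormSq
  rw [Finset.mul_sum, Finset.mul_sum, ← Finset.sum_add_distrib]
  refine Finset.sum_congr rfl fun i _ => ?_
  have hpartial_comp : (fun y => fderiv ℝ (fun y => φ (f y)) y (EuclideanSpace.single i 1))
      =ᶠ[𝓝 x] fun y => φ' (f y) * fderiv ℝ f y (EuclideanSpace.single i 1) :=
    hfderiv.mono fun y hy => congrArg (· (EuclideanSpace.single i 1)) hy
  rw [hpartial_comp.fderiv_eq, fderiv_fun_mul hφ'f.differentiableAt (hpartial _), hφ'f.fderiv]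
  simp only [add_apply, smul_apply, smul_eq_mul]
  ring

theorem lap_rpow_sub_rpow (hf : ContDiffAt ℝ 2 f x) (hpos : 0 < f x) (p q : ℝ) :
    lap (fun y => f y ^ p - f y ^ q) x =
      (p * f x ^ (p - 1) - q * f x ^ (q - 1)) * lap f x +
        (p * (p - 1) * f x ^ (p - 2) - q * (q - 1) * f x ^ (q - 2)) * gradNormSq f x := by
  refine lap_comp (φ := fun t => t ^ p - t ^ q) (φ' := fun t => p * t ^ (p - 1) - q * t ^ (q - 1))
    hf ?_ ?_
  · filter_upwards [hf.continuousAt.eventually (lt_mem_nhds hpos)] with y hy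
    exact (Real.hasDerivAt_rpow_const (Or.inl hy.ne')).sub
      (Real.hasDerivAt_rpow_const (Or.inl hy.ne'))
  · refine (((Real.hasDerivAt_rpow_const (p := p - 1) (Or.inl hpos.ne')).const_mul p).sub
      ((Real.hasDerivAt_rpow_const (p := q - 1) (Or.inl hpos.ne')).const_mul q)).congr_deriv ?_
    rw [show p - 1 - 1 = p - 2 by ring, show q - 1 - 1 = q - 2 by ring]
    ring

end Laplacian

theorem hardy_radial_identity {t : ℝ} (ht : 0 < t) {a H μ : ℝ} (ha : a ^ 2 - 2 * H * a + μ = 0)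
    (ε G : ℝ) :
    -((-a * t ^ (-a - 1) - (-a + ε) * t ^ (-a + ε - 1)) * ((2 * H + 1) / t + G) +
        (-a * (-a - 1) * t ^ (-a - 2) - (-a + ε) * (-a + ε - 1) * t ^ (-a + ε - 2))) -
      μ * t ^ (-(2 : ℝ)) * (t ^ (-a) - t ^ (-a + ε)) =
    t ^ (-a - 1) * ((ε ^ 2 + 2 * ε * (H - a)) * t ^ (ε - 1) + G * (a + (ε - a) * t ^ ε)) := by
  have hpow (r s : ℝ) : t ^ (r + s) = t ^ r * t ^ s := Real.rpow_add ht r s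
  have hε1 : t ^ (ε - 1) = t ^ ε / t := by rw [Real.rpow_sub ht, Real.rpow_one]
  rw [show -a - 1 = -a + -1 by ring, show -a - 2 = -a + -1 + -1 by ring,
    show -a + ε - 1 = -a + ε + -1 by ring, show -a + ε - 2 = -a + ε + -1 + -1 by ring,
    show -(2 : ℝ) = -1 + -1 by ring]
  simp only [hpow, hε1, Real.rpow_neg_one]
  have : t ^ (-a) ≠ 0 := (Real.rpow_pos_of_pos ht _).ne'
  field_simp
  linear_combination (t ^ ε - 1) * ha

theorem eventually_le_mul_rpow_sub_one {ε : ℝ} (hε : ε < 1) {C : ℝ} (hC : 0 < C) (K : ℝ) :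
    ∀ᶠ t in 𝓝[>] (0 : ℝ), K ≤ C * t ^ (ε - 1) :=
  ((tendsto_rpow_neg_nhdsGT_zero (by linarith)).const_mul_atTop hC).eventually_ge_atTop K

theorem stmt_5_general (N k : ℕ)
    (U : Set (EuclideanSpace ℝ (Fin N))) (hU : IsOpen U)
    (d g : EuclideanSpace ℝ (Fin N) → ℝ)
    (hd2 : ContDiffOn ℝ 2 d U) (hdpos : ∀ x ∈ U, 0 < d x)
    (hgrad : ∀ x ∈ U, gradNormSq d x = 1)
    (hgbd : ∃ M, ∀ x ∈ U, |g x| ≤ M)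
    (hlapd : ∀ x ∈ U, lap d x = ((N : ℝ) - k - 1) / d x + g x)
    (H μ am : ℝ) (hH : H = ((N : ℝ) - k - 2) / 2)
    (hμ : μ < H ^ 2) (ham : am = H - Real.sqrt (H ^ 2 - μ)) :
    ∀ ε : ℝ, 0 < ε → ε < 1 → ∃ β > (0 : ℝ), ∀ x ∈ U, d x < β →
      0 ≤ d x ^ (-am) - d x ^ (-am + ε) ∧
      0 ≤ -(lap (fun y => d y ^ (-am) - d y ^ (-am + ε)) x) -
            μ * d x ^ (-(2 : ℝ)) * (d x ^ (-am) - d x ^ (-am + ε)) := by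
  intro ε hε hε1
  obtain ⟨M, hM⟩ := hgbd
  have hroot : am ^ 2 - 2 * H * am + μ = 0 := by
    rw [ham]; linear_combination Real.sq_sqrt (sub_nonneg.mpr hμ.le)
  have hC : 0 < ε ^ 2 + 2 * ε * (H - am) := by
    have : 0 ≤ H - am := by rw [ham]; simp [Real.sqrt_nonneg]
    positivity
  obtain ⟨β, hβ, hsmall⟩ := mem_nhdsGT_iff_exists_Ioo_subset.mp
    ((eventually_le_mul_rpow_sub_one hε1 hC (M * (|am| + |ε - am|))).and
      (nhdsWithin_le_nhds (eventually_lt_nhds one_pos)))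
  refine ⟨β, hβ, fun x hx hxβ => ?_⟩
  set t := d x
  obtain ⟨hCt, ht1⟩ := hsmall ⟨hdpos x hx, hxβ⟩
  have ht : 0 < t := hdpos x hx
  have htε : t ^ ε ≤ 1 := Real.rpow_le_one ht.le ht1.le hε.le
  refine ⟨sub_nonneg.mpr (Real.rpow_le_rpow_of_exponent_ge ht ht1.le (by linarith)), ?_⟩
  rw [lap_rpow_sub_rpow (hd2.contDiffAt (hU.mem_nhds hx)) ht, hlapd x hx, hgrad x hx, mul_one,
    show (N : ℝ) - k - 1 = 2 * H + 1 by rw [hH]; ring, hardy_radial_identity ht hroot]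
  have hgterm : -(g x * (am + (ε - am) * t ^ ε)) ≤ M * (|am| + |ε - am|) := by
    have hbracket : |am + (ε - am) * t ^ ε| ≤ |am| + |ε - am| :=
      calc |am + (ε - am) * t ^ ε| ≤ |am| + |ε - am| * t ^ ε := by
            grw [abs_add_le, abs_mul, abs_of_nonneg (Real.rpow_nonneg ht.le ε)]
        _ ≤ |am| + |ε - am| := by grw [htε, mul_one]
    calc -(g x * (am + (ε - am) * t ^ ε)) ≤ |g x| * |am + (ε - am) * t ^ ε| := by
          rw [← abs_mul]; exact neg_le_abs _
      _ ≤ M * (|am| + |ε - am|) := by grw [hbracket, hM x hx]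
  exact mul_nonneg (Real.rpow_pos_of_pos ht _).le (by linarith)

theorem stmt_5 (N k : ℕ) (hN : 3 ≤ N) (hk : k + 2 < N)
    (U : Set (EuclideanSpace ℝ (Fin N))) (hU : IsOpen U)
    (d g : EuclideanSpace ℝ (Fin N) → ℝ)
    (hd2 : ContDiffOn ℝ 2 d U) (hdpos : ∀ x ∈ U, 0 < d x)
    (hgrad : ∀ x ∈ U, gradNormSq d x = 1)
    (hgbd : ∃ M, ∀ x ∈ U, |g x| ≤ M)
    (hlapd : ∀ x ∈ U, lap d x = ((N : ℝ) - k - 1) / d x + g x)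
    (H μ am : ℝ) (hH : H = ((N : ℝ) - k - 2) / 2) (hH0 : 0 < H)
    (hμ : μ < H ^ 2) (ham : am = H - Real.sqrt (H ^ 2 - μ)) :
    ∀ ε : ℝ, 0 < ε → ε < 1 → ∃ β > (0 : ℝ), ∀ x ∈ U, d x < β →
      0 ≤ d x ^ (-am) - d x ^ (-am + ε) ∧
      0 ≤ -(lap (fun y => d y ^ (-am) - d y ^ (-am + ε)) x) -
            μ * d x ^ (-(2 : ℝ)) * (d x ^ (-am) - d x ^ (-am + ε)) :=
  stmt_5_general N k U hU d g hd2 hdpos hgrad hgbd hlapd H μ am hH hμ ham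
end

section
/- Let $N \geq 3$, $k$ integer with $0 \leq k < N-2$, $0 < \alpha < \gamma < N$, $\alpha < N-k$, and $K = \mathbb{R}^k \times \{0\} \subset \mathbb{R}^N$. Fix $x \in \mathbb{R}^N \setminus K$ and $\lambda > 0$, and set $A_\lambda(x) = \{ y \in B(0,1) \setminus \{x\} : |x-y|^{-N+\gamma} > \lambda \}$. Then there is a constant $C = C(N,k,\alpha,\gamma)$ such that $\int_{A_\lambda(x)} |y''|^{-\alpha}\, dy \leq C\, \lambda^{-\frac{N-\alpha}{N-\gamma}}$. -/
/-!
A point `y` of the region satisfies `‖x - y‖ < r := λ ^ (-1 / (N - γ))`, so it suffices to bound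
`∫_{B(c, r)} |y''| ^ (-α)` by `C r ^ (N - α)` uniformly in the centre `c`. Splitting coordinates as
`(y'', y')`, the ball `B(c, r)` lies in a product of a Euclidean ball of radius `r` in `ℝ ^ (N - k)`
and a cube of side `2 r` in `ℝ ^ k`, which reduces the estimate to
`∫_{B(c'', r)} |z| ^ (-α) dz ≤ C r ^ (N - k - α)`. By homogeneity this is
`r ^ (N - k - α) ∫_{B(c'' / r, 1)} |z| ^ (-α)`, and the integral over any unit ball is at most
the (finite, as `α < N - k`) integral over `B(0, 1)` plus the volume of a unit ball, because
`|z| ^ (-α) ≤ 1` off `B(0, 1)`.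
-/

open MeasureTheory Metric Set Module
open scoped ENNReal

section NormRpowNeg

variable {E : Type*} [NormedAddCommGroup E] [MeasurableSpace E] [BorelSpace E]
  (μ : Measure E) [μ.IsAddHaarMeasure]

lemma setLIntegral_ball_one_norm_rpow_neg_le {α : ℝ} (hα : 0 ≤ α) (c : E) :
    ∫⁻ z in ball c 1, ENNReal.ofReal (‖z‖ ^ (-α)) ∂μ ≤
      ∫⁻ z in ball 0 1, ENNReal.ofReal (‖z‖ ^ (-α)) ∂μ + μ (ball 0 1) := by
  have hfar : ∀ z ∈ ball c 1 \ ball 0 1, ENNReal.ofReal (‖z‖ ^ (-α)) ≤ 1 := fun z hz => by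
    have hz1 : 1 ≤ ‖z‖ := by simpa using hz.2
    exact ENNReal.ofReal_le_one.2 (Real.rpow_le_one_of_one_le_of_nonpos hz1 (neg_nonpos.2 hα))
  calc ∫⁻ z in ball c 1, ENNReal.ofReal (‖z‖ ^ (-α)) ∂μ
      ≤ ∫⁻ z in ball 0 1 ∪ (ball c 1 \ ball 0 1), ENNReal.ofReal (‖z‖ ^ (-α)) ∂μ :=
        lintegral_mono_set (by rw [union_sdiff_self]; exact subset_union_right)
    _ ≤ ∫⁻ z in ball 0 1, ENNReal.ofReal (‖z‖ ^ (-α)) ∂μ +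
          ∫⁻ z in ball c 1 \ ball 0 1, ENNReal.ofReal (‖z‖ ^ (-α)) ∂μ :=
        lintegral_union_le _ _ _
    _ ≤ ∫⁻ z in ball 0 1, ENNReal.ofReal (‖z‖ ^ (-α)) ∂μ + μ (ball c 1) := by
        gcongr
        exact (setLIntegral_mono' (measurableSet_ball.diff measurableSet_ball) hfar).trans
          ((setLIntegral_one _).trans_le (measure_mono sdiff_subset))
    _ = ∫⁻ z in ball 0 1, ENNReal.ofReal (‖z‖ ^ (-α)) ∂μ + μ (ball 0 1) := by
        rw [Measure.addHaar_ball_center]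

variable [NormedSpace ℝ E] [FiniteDimensional ℝ E]

lemma setLIntegral_ball_norm_rpow_neg_eq (α : ℝ) (c : E) {t : ℝ} (ht : 0 < t) :
    ∫⁻ z in ball c t, ENNReal.ofReal (‖z‖ ^ (-α)) ∂μ =
      ENNReal.ofReal (t ^ ((finrank ℝ E : ℝ) - α)) *
        ∫⁻ z in ball (t⁻¹ • c) 1, ENNReal.ofReal (‖z‖ ^ (-α)) ∂μ := by
  set d := finrank ℝ E
  have hmap : Measure.map (t • ·) μ = ENNReal.ofReal ((t ^ d)⁻¹) • μ := by
    rw [Measure.map_addHaar_smul μ ht.ne', abs_of_pos (by positivity)]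
  have hpre : (t • ·) ⁻¹' ball c t = ball (t⁻¹ • c) 1 := by
    rw [Set.preimage_smul₀ ht.ne', _root_.smul_ball (inv_ne_zero ht.ne'), norm_inv,
      Real.norm_of_nonneg ht.le, inv_mul_cancel₀ ht.ne']
  have hscale : ∀ w : E, ENNReal.ofReal (‖t • w‖ ^ (-α)) =
      ENNReal.ofReal (t ^ (-α)) * ENNReal.ofReal (‖w‖ ^ (-α)) := fun w => by
    rw [norm_smul, Real.norm_of_nonneg ht.le, Real.mul_rpow ht.le (norm_nonneg w),
      ENNReal.ofReal_mul (by positivity)]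
  have hchange := ((measurable_const_smul t).measurePreserving μ).setLIntegral_comp_preimage_emb
    (Homeomorph.smulOfNeZero t ht.ne').measurableEmbedding
    (fun z => ENNReal.ofReal (‖z‖ ^ (-α))) (ball c t)
  simp only [hpre, hscale, hmap, Measure.restrict_smul, lintegral_smul_measure] at hchange
  rw [lintegral_const_mul' _ _ ENNReal.ofReal_ne_top] at hchange
  have hpow : ENNReal.ofReal (t ^ ((d : ℝ) - α)) =
      ENNReal.ofReal (t ^ d) * ENNReal.ofReal (t ^ (-α)) := by
    rw [← ENNReal.ofReal_mul (by positivity), ← Real.rpow_natCast, ← Real.rpow_add ht,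
      sub_eq_add_neg]
  rw [hpow, mul_assoc, hchange, smul_eq_mul, ← mul_assoc, ← ENNReal.ofReal_mul (by positivity),
    mul_inv_cancel₀ (by positivity), ENNReal.ofReal_one, one_mul]

lemma setLIntegral_ball_zero_one_norm_rpow_neg_lt_top {α : ℝ} (hα₀ : 0 ≤ α)
    (hα : α < finrank ℝ E) : ∫⁻ z in ball 0 1, ENNReal.ofReal (‖z‖ ^ (-α)) ∂μ < ∞ := by
  have hint : IntegrableOn (fun z : E => ‖z‖ ^ (-α)) (ball 0 1) μ :=
    integrableOn_ball_of_norm_le_rpow (C := 1) (by exact_mod_cast (hα₀.trans_lt hα))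
      hα (ae_of_all _ fun z => by simp [abs_of_nonneg (Real.rpow_nonneg (norm_nonneg z) _)])
      (continuous_norm.measurable.pow_const _).aestronglyMeasurable
  simpa only [HasFiniteIntegral, Real.enorm_of_nonneg (Real.rpow_nonneg (norm_nonneg _) _)]
    using hint.hasFiniteIntegral

lemma exists_setLIntegral_ball_norm_rpow_neg_le {α : ℝ} (hα₀ : 0 ≤ α) (hα : α < finrank ℝ E) :
    ∃ C : ℝ, 0 ≤ C ∧ ∀ (c : E) {t : ℝ}, 0 < t →
      ∫⁻ z in ball c t, ENNReal.ofReal (‖z‖ ^ (-α)) ∂μ ≤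
        ENNReal.ofReal (t ^ ((finrank ℝ E : ℝ) - α) * C) := by
  set D := ∫⁻ z in ball 0 1, ENNReal.ofReal (‖z‖ ^ (-α)) ∂μ + μ (ball 0 1)
  have hD : D ≠ ∞ := ENNReal.add_ne_top.2
    ⟨(setLIntegral_ball_zero_one_norm_rpow_neg_lt_top μ hα₀ hα).ne, measure_ball_lt_top.ne⟩
  refine ⟨D.toReal, ENNReal.toReal_nonneg, fun c t ht => ?_⟩
  rw [setLIntegral_ball_norm_rpow_neg_eq μ α c ht, ENNReal.ofReal_mul (by positivity),
    ENNReal.ofReal_toReal hD]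
  gcongr
  exact setLIntegral_ball_one_norm_rpow_neg_le μ hα₀ _

end NormRpowNeg

section TransverseSplit

variable {ι : Type*} (p : ι → Prop) [DecidablePred p]

/-- The coordinates `(y'', y')` of `y`; the tangential block `y'` carries the sup norm, so that
balls map into products of balls (`lipschitzWith_transverseSplit`). -/
def transverseSplit :
    EuclideanSpace ℝ ι ≃ᵐ EuclideanSpace ℝ {i // p i} × ({i // ¬p i} → ℝ) :=
  (MeasurableEquiv.toLp 2 (ι → ℝ)).symm.trans <|
    (MeasurableEquiv.piEquivPiSubtypeProd (fun _ => ℝ) p).trans <|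
      MeasurableEquiv.prodCongr (MeasurableEquiv.toLp 2 _) (MeasurableEquiv.refl _)

@[simp]
lemma transverseSplit_fst_apply (y : EuclideanSpace ℝ ι) (j : {i // p i}) :
    (transverseSplit p y).1 j = y j := rfl

@[simp]
lemma transverseSplit_snd_apply (y : EuclideanSpace ℝ ι) (j : {i // ¬p i}) :
    (transverseSplit p y).2 j = y j := rfl

variable [Fintype ι]

lemma measurePreserving_transverseSplit : MeasurePreserving (transverseSplit p) :=
  ((PiLp.volume_preserving_toLp _).prod (MeasurePreserving.id volume)).comp
    ((volume_preserving_piEquivPiSubtypeProd (fun _ => ℝ) p).comp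
      (PiLp.volume_preserving_ofLp ι))

lemma sum_subtype_eq_sum_ite {M : Type*} [AddCommMonoid M] (f : ι → M) :
    ∑ j : {i // p i}, f j = ∑ i, if p i then f i else 0 := by
  rw [← Finset.sum_filter]
  exact (Finset.sum_subtype _ (by simp) f).symm

lemma norm_transverseSplit_fst (y : EuclideanSpace ℝ ι) :
    ‖(transverseSplit p y).1‖ = √(∑ i, if p i then y i ^ 2 else 0) := by
  rw [EuclideanSpace.norm_eq, ← sum_subtype_eq_sum_ite p (fun i => y i ^ 2)]
  simp only [Real.norm_eq_abs, sq_abs]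
  rfl

lemma lipschitzWith_transverseSplit : LipschitzWith 1 (transverseSplit p) := by
  refine LipschitzWith.of_dist_le_mul fun y z => ?_
  rw [NNReal.coe_one, one_mul, Prod.dist_eq, max_le_iff]
  constructor
  · rw [EuclideanSpace.dist_eq, EuclideanSpace.dist_eq]
    simp only [transverseSplit_fst_apply]
    rw [sum_subtype_eq_sum_ite p (fun i => dist (y i) (z i) ^ 2)]
    gcongr with i
    split_ifs
    exacts [le_rfl, sq_nonneg _]
  · exact (dist_pi_le_iff dist_nonneg).2 fun j => PiLp.dist_apply_le y z j

lemma exists_setLIntegral_ball_transverse_rpow_neg_le {α : ℝ} (hα : 0 < α)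
    (hαp : α < Fintype.card {i // p i}) :
    ∃ C : ℝ, 0 ≤ C ∧ ∀ (c : EuclideanSpace ℝ ι) {t : ℝ}, 0 < t →
      ∫⁻ y in ball c t, ENNReal.ofReal (√(∑ i, if p i then y i ^ 2 else 0) ^ (-α)) ≤
        ENNReal.ofReal (t ^ ((Fintype.card ι : ℝ) - α) * C) := by
  obtain ⟨C, hC, hball⟩ := exists_setLIntegral_ball_norm_rpow_neg_le
    (volume : Measure (EuclideanSpace ℝ {i // p i})) hα.le (by rwa [finrank_euclideanSpace])
  refine ⟨2 ^ Fintype.card {i // ¬p i} * C, by positivity, fun c t ht => ?_⟩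
  set e := transverseSplit p
  set f : EuclideanSpace ℝ {i // p i} → ℝ≥0∞ := fun v => ENNReal.ofReal (‖v‖ ^ (-α))
  have hmaps : e '' ball c t ⊆ ball (e c).1 t ×ˢ ball (e c).2 t := by
    rw [ball_prod_same, image_subset_iff]
    intro y hy
    simpa using (lipschitzWith_transverseSplit p).mapsTo_ball one_ne_zero c t hy
  calc ∫⁻ y in ball c t, ENNReal.ofReal (√(∑ i, if p i then y i ^ 2 else 0) ^ (-α))
      = ∫⁻ y in ball c t, f (e y).1 := by simp only [f, e, norm_transverseSplit_fst]
    _ = ∫⁻ w in e '' ball c t, f w.1 :=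
        (measurePreserving_transverseSplit p).setLIntegral_comp_emb e.measurableEmbedding
          (fun w => f w.1) (ball c t)
    _ ≤ ∫⁻ w in ball (e c).1 t ×ˢ ball (e c).2 t, f w.1 := lintegral_mono_set hmaps
    _ = (∫⁻ v in ball (e c).1 t, f v) * volume (ball (e c).2 t) := by
        rw [Measure.volume_eq_prod, ← Measure.prod_restrict]
        simpa using lintegral_prod_mul (ν := volume.restrict (ball (e c).2 t)) (f := f)
          (g := fun _ => 1)
          (continuous_norm.measurable.pow_const _).ennreal_ofReal.aemeasurable aemeasurable_const
    _ ≤ ENNReal.ofReal (t ^ ((Fintype.card {i // p i} : ℝ) - α) * C) *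
          ENNReal.ofReal ((2 * t) ^ Fintype.card {i // ¬p i}) := by
        rw [Real.volume_pi_ball _ ht]
        gcongr
        simpa only [finrank_euclideanSpace] using hball (e c).1 ht
    _ = ENNReal.ofReal
          (t ^ ((Fintype.card ι : ℝ) - α) * (2 ^ Fintype.card {i // ¬p i} * C)) := by
        have hcard :
            (Fintype.card {i // p i} : ℝ) + Fintype.card {i // ¬p i} = Fintype.card ι := by
          exact_mod_cast (Fintype.card_sum).symm.trans (Fintype.card_congr (Equiv.sumCompl p))
        rw [← ENNReal.ofReal_mul (by positivity), ← hcard, mul_pow, ← Real.rpow_natCast t,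
          add_sub_right_comm, Real.rpow_add ht]
        ring_nf

end TransverseSplit

lemma card_subtype_fin_le_val (N k : ℕ) : Fintype.card {i : Fin N // k ≤ (i : ℕ)} = N - k := by
  rw [Fintype.card_subtype, ← Finset.card_map Fin.valEmbedding, ← Nat.card_Ico k N]
  congr 1
  ext n
  simp only [Finset.mem_map, Finset.mem_filter, Finset.mem_univ, true_and,
    Fin.valEmbedding_apply, Finset.mem_Ico]
  constructor
  · rintro ⟨i, hi, rfl⟩
    exact ⟨hi, i.2⟩
  · rintro ⟨hk, hN⟩
    exact ⟨⟨n, hN⟩, hk, rfl⟩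

lemma integral_le_toReal_lintegral_ofReal {X : Type*} [MeasurableSpace X] {μ : Measure X}
    {f : X → ℝ} (hf : 0 ≤ f) : ∫ x, f x ∂μ ≤ (∫⁻ x, ENNReal.ofReal (f x) ∂μ).toReal := by
  simpa only [Real.norm_of_nonneg (hf _)] using
    (le_abs_self _).trans (norm_integral_le_lintegral_norm f)

theorem stmt_10_general (N k : ℕ) (α γ : ℝ)
    (hα : 0 < α) (hγ : γ < (N : ℝ)) (hαk : α < (N : ℝ) - k) :
    ∃ Cb : ℝ, ∀ (x : EuclideanSpace ℝ (Fin N)) (lam : ℝ),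
      Real.sqrt (∑ i : Fin N, if k ≤ (i : ℕ) then (x i) ^ 2 else 0) ≠ 0 → 0 < lam →
      (∫ y in {y : EuclideanSpace ℝ (Fin N) |
            y ∈ Metric.ball (0 : EuclideanSpace ℝ (Fin N)) 1 ∧ y ≠ x ∧
              lam < ‖x - y‖ ^ (-(N : ℝ) + γ)},
          (Real.sqrt (∑ i : Fin N, if k ≤ (i : ℕ) then (y i) ^ 2 else 0)) ^ (-α)) ≤
        Cb * lam ^ (-(((N : ℝ) - α) / ((N : ℝ) - γ))) := by
  have hkN : k ≤ N := by exact_mod_cast (show (k : ℝ) ≤ N by linarith)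
  obtain ⟨C, hC, hball⟩ := exists_setLIntegral_ball_transverse_rpow_neg_le
    (fun i : Fin N => k ≤ (i : ℕ)) hα (by rwa [card_subtype_fin_le_val, Nat.cast_sub hkN])
  refine ⟨C, fun x lam _ hlam => ?_⟩
  have hβ : -(N : ℝ) + γ < 0 := by linarith
  set r := lam ^ (-(N : ℝ) + γ)⁻¹
  have hA : {y : EuclideanSpace ℝ (Fin N) | y ∈ ball 0 1 ∧ y ≠ x ∧
      lam < ‖x - y‖ ^ (-(N : ℝ) + γ)} ⊆ ball x r := by
    rintro y ⟨-, hyx, hy⟩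
    rw [mem_ball, dist_comm, dist_eq_norm]
    exact (Real.lt_rpow_inv_iff_of_neg (norm_pos_iff.2 (sub_ne_zero.2 hyx.symm)) hlam hβ).2 hy
  have hr : r ^ ((N : ℝ) - α) = lam ^ (-(((N : ℝ) - α) / ((N : ℝ) - γ))) := by
    rw [← Real.rpow_mul hlam.le, show -(N : ℝ) + γ = -((N : ℝ) - γ) by ring, inv_neg]
    ring_nf
  calc _ ≤ _ :=
        integral_le_toReal_lintegral_ofReal fun y => Real.rpow_nonneg (Real.sqrt_nonneg _) _
    _ ≤ r ^ ((N : ℝ) - α) * C := by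
        refine ENNReal.toReal_le_of_le_ofReal (by positivity) ((lintegral_mono_set hA).trans ?_)
        simpa using hball x (Real.rpow_pos_of_pos hlam _)
    _ = C * lam ^ (-(((N : ℝ) - α) / ((N : ℝ) - γ))) := by rw [hr, mul_comm]

theorem stmt_10 (N k : ℕ) (hN : 3 ≤ N) (hk : k + 2 < N) (α γ : ℝ)
    (hα : 0 < α) (hαγ : α < γ) (hγ : γ < (N : ℝ)) (hαk : α < (N : ℝ) - k) :
    ∃ Cb : ℝ, ∀ (x : EuclideanSpace ℝ (Fin N)) (lam : ℝ),
      Real.sqrt (∑ i : Fin N, if k ≤ (i : ℕ) then (x i) ^ 2 else 0) ≠ 0 → 0 < lam →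
      (∫ y in {y : EuclideanSpace ℝ (Fin N) |
            y ∈ Metric.ball (0 : EuclideanSpace ℝ (Fin N)) 1 ∧ y ≠ x ∧
              lam < ‖x - y‖ ^ (-(N : ℝ) + γ)},
          (Real.sqrt (∑ i : Fin N, if k ≤ (i : ℕ) then (y i) ^ 2 else 0)) ^ (-α)) ≤
        Cb * lam ^ (-(((N : ℝ) - α) / ((N : ℝ) - γ))) :=
  stmt_10_general N k α γ hα hγ hαk
end
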